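/- (Theorem kWeightMatch / kMNT) Let V be a finite set of n trips and 𝓛 a family of subsets of V each of cardinality at least 2; weight each hyper-link L ∈ 𝓛 by w(L) = |L| − 1. Then the minimum, over all feasible trip sets P, of the number of parts of P equals n − W, where W is the maximum, over all matchings M of 𝓛, of ∑_{L∈M} w(L). -/

import Mathlib

open Finset

/-- A feasible trip set for a shareability hyper-network `𝓛`: a partition of the trip set
`V` in which every part is either a singleton or a hyper-link of `𝓛`. -/
def IsFeasibleHyperTripSet {V : Type*} [Fintype V] [DecidableEq V]
    (𝓛 : Finset (Finset V)) (P : Finpartition (univ : Finset V)) : Prop :=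
  ∀ p ∈ P.parts, (∃ v : V, p = {v}) ∨ p ∈ 𝓛

/-- A matching of the hyper-network `𝓛`: a subset of `𝓛` whose members are pairwise
disjoint. -/
def IsHyperMatching {V : Type*} (𝓛 M : Finset (Finset V)) : Prop :=
  M ⊆ 𝓛 ∧ (M : Set (Finset V)).Pairwise Disjoint

/-! A partition `P` of `V` has `|V| - ∑_{p ∈ P} (|p| - 1)` parts. In a feasible partition only
the hyper-link parts contribute to the sum, and they form a matching, so every feasible partition
has at least `n - W` parts. Conversely, a matching of weight `W`, completed by the singletons of
the uncovered trips, is a feasible partition with exactly `n - W` parts. -/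

namespace Finpartition

section DistribLattice

variable {α : Type*} [DistribLattice α] [OrderBot α] {a b : α}

theorem disjoint_parts_of_disjoint (P : Finpartition a) (Q : Finpartition b)
    (hab : Disjoint a b) : Disjoint P.parts Q.parts :=
  disjoint_left.mpr fun _ hP hQ =>
    P.ne_bot hP <| disjoint_self.mp <| hab.mono (P.le hP) (Q.le hQ)

variable [DecidableEq α]

@[simps]
def disjUnion (P : Finpartition a) (Q : Finpartition b) (hab : Disjoint a b) :
    Finpartition (a ⊔ b) where
  parts := P.parts ∪ Q.parts
  supIndep := supIndep_iff_pairwiseDisjoint.mpr <| by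
    rw [coe_union]
    exact P.supIndep.pairwiseDisjoint.union Q.supIndep.pairwiseDisjoint
      fun _ hp _ hq _ => hab.mono (P.le hp) (Q.le hq)
  sup_parts := by rw [sup_union, P.sup_parts, Q.sup_parts]
  bot_notMem := by simp only [mem_union, P.bot_notMem, Q.bot_notMem, or_self, not_false_eq_true]

theorem sum_disjUnion {β : Type*} [AddCommMonoid β] (P : Finpartition a) (Q : Finpartition b)
    (hab : Disjoint a b) (f : α → β) :
    ∑ p ∈ (P.disjUnion Q hab).parts, f p = ∑ p ∈ P.parts, f p + ∑ p ∈ Q.parts, f p :=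
  sum_union (disjoint_parts_of_disjoint P Q hab)

end DistribLattice

variable {α : Type*} [DecidableEq α] {s : Finset α}

theorem sum_card_sub_one_add_card_parts (P : Finpartition s) :
    ∑ p ∈ P.parts, (#p - 1) + #P.parts = #s := by
  rw [← P.sum_card_parts, card_eq_sum_ones, ← sum_add_distrib]
  exact sum_congr rfl fun p hp => Nat.sub_add_cancel (P.nonempty_of_mem_parts hp).card_pos

def extendBySingletons (M : Finset (Finset α)) (hM : (M : Set (Finset α)).PairwiseDisjoint id)
    (hMs : M.sup id ⊆ s) : Finpartition s :=
  ((ofPairwiseDisjoint M hM).disjUnion ⊥ disjoint_sdiff).copy (union_sdiff_of_subset hMs)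

variable {M : Finset (Finset α)} (hM : (M : Set (Finset α)).PairwiseDisjoint id)
  (hMs : M.sup id ⊆ s)

theorem mem_or_eq_singleton_of_mem_extendBySingletons {p : Finset α}
    (hp : p ∈ (extendBySingletons M hM hMs).parts) : p ∈ M ∨ ∃ x, p = {x} := by
  simp only [extendBySingletons, copy_parts, disjUnion_parts, ofPairwiseDisjoint_parts,
    mem_union, mem_bot_iff] at hp
  rcases hp with hp | ⟨x, -, rfl⟩
  · exact Or.inl (mem_of_mem_erase hp)
  · exact Or.inr ⟨x, rfl⟩

theorem sum_card_sub_one_extendBySingletons :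
    ∑ p ∈ (extendBySingletons M hM hMs).parts, (#p - 1) = ∑ p ∈ M, (#p - 1) := by
  have hsingletons : ∑ p ∈ (⊥ : Finpartition (s \ M.sup id)).parts, (#p - 1) = 0 :=
    sum_eq_zero fun p hp => by
      obtain ⟨x, -, rfl⟩ := mem_bot_iff.mp hp
      rfl
  rw [extendBySingletons, copy_parts, sum_disjUnion, hsingletons, add_zero]
  exact sum_ofPairwiseDisjoint_eq_sum hM rfl

end Finpartition

section HyperNetwork

variable {V : Type*} [Fintype V] [DecidableEq V] {𝓛 : Finset (Finset V)}

theorem isHyperMatching_filter_parts (P : Finpartition (univ : Finset V)) :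
    IsHyperMatching 𝓛 (P.parts.filter (· ∈ 𝓛)) :=
  ⟨fun _ hp => (mem_filter.mp hp).2,
    P.supIndep.pairwiseDisjoint.subset (filter_subset _ _)⟩

theorem IsFeasibleHyperTripSet.sum_card_sub_one_eq {P : Finpartition (univ : Finset V)}
    (hP : IsFeasibleHyperTripSet 𝓛 P) :
    ∑ p ∈ P.parts, (#p - 1) = ∑ p ∈ P.parts.filter (· ∈ 𝓛), (#p - 1) := by
  refine (sum_filter_of_ne fun p hp hne => ?_).symm
  rcases hP p hp with ⟨v, rfl⟩ | hL
  · exact absurd rfl hne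
  · exact hL

theorem IsHyperMatching.isFeasibleHyperTripSet_extendBySingletons {M : Finset (Finset V)}
    (hM : IsHyperMatching 𝓛 M) :
    IsFeasibleHyperTripSet 𝓛 (Finpartition.extendBySingletons M hM.2 (subset_univ _)) :=
  fun _ hp => (Finpartition.mem_or_eq_singleton_of_mem_extendBySingletons hM.2 _ hp).symm.imp id
    fun hpM => hM.1 hpM

end HyperNetwork

theorem min_trips_eq_card_sub_max_weight_hypermatching_general
    {V : Type*} [Fintype V] [DecidableEq V] (𝓛 : Finset (Finset V)) (n : ℕ)
    (hn : Fintype.card V = n) (W : ℕ)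
    (hW : IsGreatest {s : ℕ | ∃ M : Finset (Finset V), IsHyperMatching 𝓛 M ∧
        ∑ L ∈ M, (L.card - 1) = s} W) :
    IsLeast {m : ℕ | ∃ P : Finpartition (univ : Finset V),
        IsFeasibleHyperTripSet 𝓛 P ∧ P.parts.card = m} (n - W) := by
  subst hn
  constructor
  · obtain ⟨M, hM, rfl⟩ := hW.1
    have hcount :=
      (Finpartition.extendBySingletons M hM.2 (subset_univ _)).sum_card_sub_one_add_card_parts
    rw [Finpartition.sum_card_sub_one_extendBySingletons hM.2 (subset_univ _), card_univ] at hcount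
    exact ⟨_, hM.isFeasibleHyperTripSet_extendBySingletons, by omega⟩
  · rintro _ ⟨P, hP, rfl⟩
    have hweight := hW.2 ⟨_, isHyperMatching_filter_parts (𝓛 := 𝓛) P, rfl⟩
    have hcount := P.sum_card_sub_one_add_card_parts
    rw [hP.sum_card_sub_one_eq, card_univ] at hcount
    omega

/-- Theorem kWeightMatch / kMNT: weighting each hyper-link `L ∈ 𝓛` by `w L = |L| - 1`, the
minimum number of parts of a feasible trip set on `n` trips equals `n - W`, where `W` is
the maximum total weight of a matching of `𝓛`. -/
theorem min_trips_eq_card_sub_max_weight_hypermatching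
    {V : Type*} [Fintype V] [DecidableEq V] (𝓛 : Finset (Finset V)) (n : ℕ)
    (hn : Fintype.card V = n) (h𝓛 : ∀ L ∈ 𝓛, 2 ≤ L.card) (W : ℕ)
    (hW : IsGreatest {s : ℕ | ∃ M : Finset (Finset V), IsHyperMatching 𝓛 M ∧
        ∑ L ∈ M, (L.card - 1) = s} W) :
    IsLeast {m : ℕ | ∃ P : Finpartition (univ : Finset V),
        IsFeasibleHyperTripSet 𝓛 P ∧ P.parts.card = m} (n - W) :=
  min_trips_eq_card_sub_max_weight_hypermatching_general 𝓛 n hn W hW
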